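/- Let R be a 2k×2k complex matrix with I − R invertible, and set X = (I + R)(I − R)^{-1}. Then X is doubled-up and ♭-skew-Hermitian (X^♭ = −X) if and only if R is Bogoliubov. Conversely, if X is a 2k×2k doubled-up matrix with X^♭ = −X such that X + I is invertible, then R := (X − I)(X + I)^{-1} is Bogoliubov, I − R is invertible, and (I + R)(I − R)^{-1} = X. -/

import Mathlib

open Matrix Ring

noncomputable section

/-- The Krein-space metric `J_{2k} = diag(I_k, -I_k)`. -/
def Jmat (k : ℕ) : Matrix (Fin k ⊕ Fin k) (Fin k ⊕ Fin k) ℂ :=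
  Matrix.fromBlocks 1 0 0 (-1)

/-- The block-swap matrix `Σ_{2k} = [[0, I_k],[I_k, 0]]`. -/
def Sig (k : ℕ) : Matrix (Fin k ⊕ Fin k) (Fin k ⊕ Fin k) ℂ :=
  Matrix.fromBlocks 0 1 1 0

/-- A `2r × 2s` complex matrix is doubled-up if `Σ_{2r} X Σ_{2s} = X^#`. -/
def DoubledUp {r s : ℕ} (X : Matrix (Fin r ⊕ Fin r) (Fin s ⊕ Fin s) ℂ) : Prop :=
  Sig r * X * Sig s = X.map (starRingEnd ℂ)

/-- The ♭-adjoint `X^♭ = J_{2s} X† J_{2r}` of a `2r × 2s` complex matrix. -/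
def flatAdj {r s : ℕ} (X : Matrix (Fin r ⊕ Fin r) (Fin s ⊕ Fin s) ℂ) :
    Matrix (Fin s ⊕ Fin s) (Fin r ⊕ Fin r) ℂ :=
  Jmat s * Xᴴ * Jmat r

/-- A `2k × 2k` complex matrix is Bogoliubov if it is doubled-up and ♭-unitary. -/
def Bogoliubov {k : ℕ} (R : Matrix (Fin k ⊕ Fin k) (Fin k ⊕ Fin k) ℂ) : Prop :=
  DoubledUp R ∧ R * flatAdj R = 1 ∧ flatAdj R * R = 1

/-! The Cayley transform `c(R) = (1 + R)(1 - R)⁻¹` equals `2(1 - R)⁻¹ - 1`; as soon as `2` is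
invertible this makes it injective on `{R | 1 - R invertible}`, with inverse
`X ↦ (X - 1)(X + 1)⁻¹`, and turns `c(F) = -c(R)` into `(1 - F)⁻¹ + (1 - R)⁻¹ = 1`,
i.e. `F R = 1`.
It commutes with every ring homomorphism and with every ring anti-homomorphism. Both sides of
`Σ X Σ = X^#` are ring homomorphisms of `X`, so `c(R)` is doubled-up iff `R` is; and
`X ↦ X^♭ = J X† J` is an anti-homomorphism, so `c(R)^♭ = c(R^♭)`, which equals `-c(R)` iff
`R^♭ R = 1`. -/

namespace Ring

variable {A B : Type*} [Ring A] [Ring B]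

def cayley (R : A) : A := (1 + R) * (1 - R)⁻¹ʳ

theorem cayley_eq_two_mul_inverse_sub_one {R : A} (hR : IsUnit (1 - R)) :
    cayley R = 2 * (1 - R)⁻¹ʳ - 1 := by
  rw [cayley, show 1 + R = 2 - (1 - R) by rw [← one_add_one_eq_two]; abel, sub_mul,
    mul_inverse_cancel _ hR]

theorem inverse_mul_eq_cayley {R : A} (hR : IsUnit (1 - R)) :
    (1 - R)⁻¹ʳ * (1 + R) = cayley R := by
  rw [cayley_eq_two_mul_inverse_sub_one hR,
    show 1 + R = 2 - (1 - R) by rw [← one_add_one_eq_two]; abel,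
    mul_sub, inverse_mul_cancel _ hR, (Commute.ofNat_right _ 2).eq]

theorem _root_.RingHom.map_ringInverse (f : A →+* B) {x : A} (hx : IsUnit x) :
    f x⁻¹ʳ = (f x)⁻¹ʳ := by
  rw [← one_mul (f x⁻¹ʳ), ← inverse_mul_cancel _ (hx.map f), mul_assoc, ← map_mul,
    mul_inverse_cancel _ hx, map_one, mul_one]

theorem map_cayley (f : A →+* B) {R : A} (hR : IsUnit (1 - R)) :
    f (cayley R) = cayley (f R) := by
  rw [cayley, cayley, map_mul, f.map_ringInverse hR, map_add, map_sub, map_one]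

theorem isUnit_one_sub_map (f : A →+* B) {R : A} (hR : IsUnit (1 - R)) : IsUnit (1 - f R) := by
  simpa only [map_sub, map_one] using hR.map f

theorem isUnit_one_sub_star [StarRing A] {R : A} (hR : IsUnit (1 - R)) :
    IsUnit (1 - star R) := by
  rwa [← star_one, ← star_sub, isUnit_star]

theorem star_cayley [StarRing A] {R : A} (hR : IsUnit (1 - R)) :
    star (cayley R) = cayley (star R) := by
  rw [cayley, star_mul, ← inverse_star, star_sub, star_add, star_one,
    inverse_mul_eq_cayley (isUnit_one_sub_star hR)]

theorem cayley_inj (h2 : IsUnit (2 : A)) {R S : A} (hR : IsUnit (1 - R)) (hS : IsUnit (1 - S)) :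
    cayley R = cayley S ↔ R = S := by
  refine ⟨fun h => ?_, congrArg cayley⟩
  rw [cayley_eq_two_mul_inverse_sub_one hR, cayley_eq_two_mul_inverse_sub_one hS,
    sub_left_inj, h2.mul_right_inj] at h
  have := congrArg Ring.inverse h
  rwa [inverse_inverse hR, inverse_inverse hS, sub_right_inj] at this

theorem cayley_eq_neg_cayley_iff (h2 : IsUnit (2 : A)) {F R : A} (hF : IsUnit (1 - F))
    (hR : IsUnit (1 - R)) : cayley F = -cayley R ↔ F * R = 1 := by
  have key : (1 - F) * (cayley F + cayley R) * (1 - R) = 2 * (1 - F * R) := by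
    rw [← inverse_mul_eq_cayley hF, cayley, mul_add, add_mul, ← mul_assoc,
      mul_inverse_cancel _ hF, one_mul, mul_assoc, mul_assoc, inverse_mul_cancel _ hR, mul_one,
      ← one_add_one_eq_two]
    noncomm_ring
  rw [eq_neg_iff_add_eq_zero, ← hF.mul_right_eq_zero, ← hR.mul_left_eq_zero, key,
    h2.mul_right_eq_zero, sub_eq_zero, eq_comm]

def cayleyInv (X : A) : A := (X - 1) * (X + 1)⁻¹ʳ

theorem one_sub_cayleyInv {X : A} (hX : IsUnit (X + 1)) :
    1 - cayleyInv X = 2 * (X + 1)⁻¹ʳ := by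
  rw [cayleyInv, show X - 1 = X + 1 - 2 by rw [← one_add_one_eq_two]; abel, sub_mul,
    mul_inverse_cancel _ hX, sub_sub_cancel]

theorem isUnit_one_sub_cayleyInv (h2 : IsUnit (2 : A)) {X : A} (hX : IsUnit (X + 1)) :
    IsUnit (1 - cayleyInv X) := by
  rw [one_sub_cayleyInv hX]
  exact h2.mul hX.ringInverse

theorem cayley_cayleyInv (h2 : IsUnit (2 : A)) {X : A} (hX : IsUnit (X + 1)) :
    cayley (cayleyInv X) = X := by
  rw [cayley_eq_two_mul_inverse_sub_one (isUnit_one_sub_cayleyInv h2 hX), one_sub_cayleyInv hX,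
    inverse_mul (.inl h2), inverse_inverse hX, ← mul_assoc, (Commute.ofNat_left 2 _).eq,
    mul_assoc, mul_inverse_cancel _ h2, mul_one, add_sub_cancel_right]

end Ring

def conjByInvolution {A : Type*} [Ring A] (s : A) (hs : s * s = 1) : A →+* A where
  toFun x := s * x * s
  map_one' := by rw [mul_one, hs]
  map_mul' x y := by
    rw [show s * x * s * (s * y * s) = s * x * (s * s) * y * s by noncomm_ring, hs]
    noncomm_ring
  map_zero' := by rw [mul_zero, zero_mul]
  map_add' x y := by rw [mul_add, add_mul]

theorem Matrix.isUnit_two {n K : Type*} [Fintype n] [DecidableEq n] [Field K] [NeZero (2 : K)] :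
    IsUnit (2 : Matrix n n K) := by
  rw [← map_ofNat (algebraMap K (Matrix n n K)) 2]
  exact two_ne_zero.isUnit.map _

theorem Matrix.cayley_eq {n K : Type*} [Fintype n] [DecidableEq n] [Field K] (R : Matrix n n K) :
    cayley R = (1 + R) * (1 - R)⁻¹ := by
  rw [cayley, nonsing_inv_eq_ringInverse]

theorem Matrix.cayleyInv_eq {n K : Type*} [Fintype n] [DecidableEq n] [Field K]
    (X : Matrix n n K) : cayleyInv X = (X - 1) * (X + 1)⁻¹ := by
  rw [cayleyInv, nonsing_inv_eq_ringInverse]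

theorem Sig_mul_Sig (k : ℕ) : Sig k * Sig k = 1 := by
  simp [Sig, fromBlocks_multiply, ← fromBlocks_one]

theorem Jmat_mul_Jmat (k : ℕ) : Jmat k * Jmat k = 1 := by
  simp [Jmat, fromBlocks_multiply, ← fromBlocks_one]

section Bogoliubov

variable {k : ℕ}

theorem doubledUp_iff_conjByInvolution (X : Matrix (Fin k ⊕ Fin k) (Fin k ⊕ Fin k) ℂ) :
    DoubledUp X ↔ conjByInvolution (Sig k) (Sig_mul_Sig k) X = (starRingEnd ℂ).mapMatrix X :=
  Iff.rfl

theorem flatAdj_eq_conjByInvolution_star (X : Matrix (Fin k ⊕ Fin k) (Fin k ⊕ Fin k) ℂ) :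
    flatAdj X = conjByInvolution (Jmat k) (Jmat_mul_Jmat k) (star X) :=
  rfl

theorem isUnit_one_sub_flatAdj {R : Matrix (Fin k ⊕ Fin k) (Fin k ⊕ Fin k) ℂ}
    (hR : IsUnit (1 - R)) : IsUnit (1 - flatAdj R) := by
  rw [flatAdj_eq_conjByInvolution_star]
  exact isUnit_one_sub_map _ (isUnit_one_sub_star hR)

theorem flatAdj_cayley {R : Matrix (Fin k ⊕ Fin k) (Fin k ⊕ Fin k) ℂ} (hR : IsUnit (1 - R)) :
    flatAdj (cayley R) = cayley (flatAdj R) := by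
  rw [flatAdj_eq_conjByInvolution_star, star_cayley hR, map_cayley _ (isUnit_one_sub_star hR),
    flatAdj_eq_conjByInvolution_star]

theorem doubledUp_cayley_iff {R : Matrix (Fin k ⊕ Fin k) (Fin k ⊕ Fin k) ℂ}
    (hR : IsUnit (1 - R)) : DoubledUp (cayley R) ↔ DoubledUp R := by
  rw [doubledUp_iff_conjByInvolution, doubledUp_iff_conjByInvolution, map_cayley _ hR,
    map_cayley _ hR,
    cayley_inj Matrix.isUnit_two (isUnit_one_sub_map _ hR) (isUnit_one_sub_map _ hR)]

theorem flatAdj_cayley_eq_neg_iff {R : Matrix (Fin k ⊕ Fin k) (Fin k ⊕ Fin k) ℂ}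
    (hR : IsUnit (1 - R)) : flatAdj (cayley R) = -cayley R ↔ flatAdj R * R = 1 := by
  rw [flatAdj_cayley hR, cayley_eq_neg_cayley_iff Matrix.isUnit_two (isUnit_one_sub_flatAdj hR) hR]

theorem bogoliubov_iff {R : Matrix (Fin k ⊕ Fin k) (Fin k ⊕ Fin k) ℂ} :
    Bogoliubov R ↔ DoubledUp R ∧ flatAdj R * R = 1 := by
  rw [Bogoliubov, mul_eq_one_comm, and_self]

theorem bogoliubov_iff_cayley {R : Matrix (Fin k ⊕ Fin k) (Fin k ⊕ Fin k) ℂ}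
    (hR : IsUnit (1 - R)) :
    Bogoliubov R ↔ DoubledUp (cayley R) ∧ flatAdj (cayley R) = -cayley R := by
  rw [bogoliubov_iff, doubledUp_cayley_iff hR, flatAdj_cayley_eq_neg_iff hR]

end Bogoliubov

/-- Cayley transform for Bogoliubov matrices: if `I − R` is invertible and
`X = (I + R)(I − R)⁻¹`, then `X` is doubled-up and ♭-skew-Hermitian iff `R` is
Bogoliubov.  Conversely, if `X` is doubled-up, `X^♭ = −X` and `X + I` is
invertible, then `R = (X − I)(X + I)⁻¹` is Bogoliubov, `I − R` is invertible,
and `(I + R)(I − R)⁻¹ = X`. -/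
theorem bogoliubov_cayley_transform (k : ℕ) :
    (∀ R : Matrix (Fin k ⊕ Fin k) (Fin k ⊕ Fin k) ℂ,
      IsUnit ((1 : Matrix (Fin k ⊕ Fin k) (Fin k ⊕ Fin k) ℂ) - R) →
      ((DoubledUp ((1 + R) * (1 - R)⁻¹) ∧
          flatAdj ((1 + R) * (1 - R)⁻¹) = -((1 + R) * (1 - R)⁻¹))
        ↔ Bogoliubov R)) ∧
    (∀ X : Matrix (Fin k ⊕ Fin k) (Fin k ⊕ Fin k) ℂ,
      DoubledUp X → flatAdj X = -X → IsUnit (X + 1) →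
      Bogoliubov ((X - 1) * (X + 1)⁻¹) ∧
      IsUnit ((1 : Matrix (Fin k ⊕ Fin k) (Fin k ⊕ Fin k) ℂ) - (X - 1) * (X + 1)⁻¹) ∧
      (1 + (X - 1) * (X + 1)⁻¹) * (1 - (X - 1) * (X + 1)⁻¹)⁻¹ = X) := by
  simp only [← Matrix.cayleyInv_eq, ← Matrix.cayley_eq]
  refine ⟨fun R hR => (bogoliubov_iff_cayley hR).symm, fun X hd hf hX => ?_⟩
  have hR := isUnit_one_sub_cayleyInv Matrix.isUnit_two hX
  have hcayley := cayley_cayleyInv Matrix.isUnit_two hX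
  refine ⟨?_, hR, hcayley⟩
  rw [bogoliubov_iff_cayley hR, hcayley]
  exact ⟨hd, hf⟩
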